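/- arXiv:1402.4276 — 2 statements merged into one kernel-verified Lean document; each statement's English description precedes it below -/
import Mathlib

section
/- Let Ω be a nonempty open convex subset of ℝⁿ and let F be a Taylorian 1-field on Ω. Then Γ¹(F;Ω) ≤ 2·Lip(Df;Ω). -/
noncomputable section

open scoped RealInnerProductSpace

section GammaDefs

variable {H : Type*} [NormedAddCommGroup H] [InnerProductSpace ℝ H]

/-- Evaluation of the first-degree polynomial `F(x)` at `a`:
`F(x)(a) = f_x + ⟨D_xf, a - x⟩`. -/
def fieldEval (f : H → ℝ) (Df : H → H) (x a : H) : ℝ :=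
  f x + ⟪Df x, a - x⟫

/-- `Γ¹(F; x, y) = 2 · sup_{a} |F(x)(a) - F(y)(a)| / (‖x-a‖² + ‖y-a‖²)` for `x ≠ y`. -/
def gammaPair (f : H → ℝ) (Df : H → H) (x y : H) : ℝ :=
  ⨆ a : H, 2 * |fieldEval f Df x a - fieldEval f Df y a| / (‖x - a‖ ^ 2 + ‖y - a‖ ^ 2)

/-- The set of values `Γ¹(F; x, y)` for `x ≠ y` ranging over `S`. -/
def gammaVals (f : H → ℝ) (Df : H → H) (S : Set H) : Set ℝ :=
  {t | ∃ x ∈ S, ∃ y ∈ S, x ≠ y ∧ t = gammaPair f Df x y}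

/-- `Γ¹(F; S) = sup_{x ≠ y ∈ S} Γ¹(F; x, y)` (real supremum, `0` if `S` has at most one point). -/
def gammaOn (f : H → ℝ) (Df : H → H) (S : Set H) : ℝ :=
  sSup (gammaVals f Df S)

end GammaDefs

section LipDefs

variable {α β : Type*} [NormedAddCommGroup α] [NormedAddCommGroup β]

/-- The set of difference quotients `‖g x - g y‖ / ‖x - y‖`, `x ≠ y ∈ S`. -/
def lipVals (g : α → β) (S : Set α) : Set ℝ :=
  {t | ∃ x ∈ S, ∃ y ∈ S, x ≠ y ∧ t = ‖g x - g y‖ / ‖x - y‖}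

/-- `Lip(g; S) = sup_{x ≠ y ∈ S} ‖g x - g y‖ / ‖x - y‖` (real supremum). -/
def lipOn (g : α → β) (S : Set α) : ℝ :=
  sSup (lipVals g S)

end LipDefs

section PsiDefs

variable {H : Type*} [NormedAddCommGroup H] [InnerProductSpace ℝ H]

/-- `v_{a,b} = ½(D_af + D_bf) + (κ/2)(b - a)`. -/
def vab (Df : H → H) (κ : ℝ) (a b : H) : H :=
  (1 / 2 : ℝ) • (Df a + Df b) + (κ / 2) • (b - a)

/-- `α_{a,b}`. -/
def alphaab (f : H → ℝ) (Df : H → H) (κ : ℝ) (a b : H) : ℝ :=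
  2 * κ * (f a - f b) + κ * ⟪Df a + Df b, b - a⟫
    - 1 / 2 * ‖Df a - Df b‖ ^ 2 + κ ^ 2 / 2 * ‖a - b‖ ^ 2

/-- `β_{a,b}(x)`. -/
def betaab (Df : H → H) (κ : ℝ) (a b x : H) : ℝ :=
  ‖(1 / 2 : ℝ) • (Df a - Df b) + (κ / 2) • ((2 : ℝ) • x - a - b)‖ ^ 2

/-- `r_{a,b}(x) = √(α_{a,b} + β_{a,b}(x))`. -/
def rab (f : H → ℝ) (Df : H → H) (κ : ℝ) (a b x : H) : ℝ :=
  Real.sqrt (alphaab f Df κ a b + betaab Df κ a b x)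

/-- `Λ_x = {v : ‖v - v_{a,b}‖ ≤ r_{a,b}(x) for all a, b ∈ Ω}`. -/
def Lambda (f : H → ℝ) (Df : H → H) (κ : ℝ) (Ω : Set H) (x : H) : Set H :=
  {v | ∀ a ∈ Ω, ∀ b ∈ Ω, ‖v - vab Df κ a b‖ ≤ rab f Df κ a b x}

/-- `Ψ⁺(F, x, a, v)`. -/
def PsiPlus (f : H → ℝ) (Df : H → H) (κ : ℝ) (x a v : H) : ℝ :=
  f a + 1 / 2 * ⟪Df a + v, x - a⟫ + κ / 4 * ‖a - x‖ ^ 2 - 1 / (4 * κ) * ‖Df a - v‖ ^ 2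

/-- `Ψ⁻(F, x, a, v)`. -/
def PsiMinus (f : H → ℝ) (Df : H → H) (κ : ℝ) (x a v : H) : ℝ :=
  f a + 1 / 2 * ⟪Df a + v, x - a⟫ - κ / 4 * ‖a - x‖ ^ 2 + 1 / (4 * κ) * ‖Df a - v‖ ^ 2

/-- `inf_{a ∈ Ω} Ψ⁺(F, x, a, v)`. -/
def infPsiPlus (f : H → ℝ) (Df : H → H) (κ : ℝ) (Ω : Set H) (x v : H) : ℝ :=
  sInf {t | ∃ a ∈ Ω, t = PsiPlus f Df κ x a v}

/-- `sup_{a ∈ Ω} Ψ⁻(F, x, a, v)`. -/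
def supPsiMinus (f : H → ℝ) (Df : H → H) (κ : ℝ) (Ω : Set H) (x v : H) : ℝ :=
  sSup {t | ∃ a ∈ Ω, t = PsiMinus f Df κ x a v}

/-- `u⁺(x) = sup_{v ∈ Λ_x} inf_{a ∈ Ω} Ψ⁺(F, x, a, v)`. -/
def uPlus (f : H → ℝ) (Df : H → H) (κ : ℝ) (Ω : Set H) (x : H) : ℝ :=
  sSup {t | ∃ v ∈ Lambda f Df κ Ω x, t = infPsiPlus f Df κ Ω x v}

/-- `u⁻(x) = inf_{v ∈ Λ_x} sup_{a ∈ Ω} Ψ⁻(F, x, a, v)`. -/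
def uMinus (f : H → ℝ) (Df : H → H) (κ : ℝ) (Ω : Set H) (x : H) : ℝ :=
  sInf {t | ∃ v ∈ Lambda f Df κ Ω x, t = supPsiMinus f Df κ Ω x v}

/-- `(g, Dg)` is a minimal Lipschitz extension of the 1-field `(f, Df)` of domain `Ω` to `H`. -/
def IsMLE (f : H → ℝ) (Df : H → H) (Ω : Set H) (g : H → ℝ) (Dg : H → H) : Prop :=
  (∀ x ∈ Ω, g x = f x ∧ Dg x = Df x) ∧ gammaOn g Dg Set.univ = gammaOn f Df Ω

/-- Over extremal MLE. -/
def IsOverExtremal (f : H → ℝ) (Df : H → H) (Ω : Set H) (g₁ : H → ℝ) (Dg₁ : H → H) : Prop :=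
  IsMLE f Df Ω g₁ Dg₁ ∧ ∀ g Dg, IsMLE f Df Ω g Dg → ∀ x, g x ≤ g₁ x

/-- Under extremal MLE. -/
def IsUnderExtremal (f : H → ℝ) (Df : H → H) (Ω : Set H) (g₂ : H → ℝ) (Dg₂ : H → H) : Prop :=
  IsMLE f Df Ω g₂ Dg₂ ∧ ∀ g Dg, IsMLE f Df Ω g Dg → ∀ x, g₂ x ≤ g x

/-- Absolutely minimal Lipschitz extension. -/
def IsAMLE (f : H → ℝ) (Df : H → H) (Ω : Set H) (g : H → ℝ) (Dg : H → H) : Prop :=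
  IsMLE f Df Ω g Dg ∧
    ∀ V : Set H, V.Nonempty → IsOpen V → Bornology.IsBounded V → closure V ⊆ Ωᶜ →
      gammaOn g Dg V = gammaOn g Dg (frontier V)

end PsiDefs

/-!
A bounded `Γ¹` makes `Df` Lipschitz (compare `F(x) - F(y)` at points `m ± w` symmetric about
the midpoint `m` of `x, y`) and makes `f` differentiable with gradient `Df`. On a convex set,
a gradient with Lipschitz constant `M` gives the Taylor bound `|f b - F(a)(b)| ≤ M/2 ‖b - a‖²`,
hence `|F(x)(m) - F(y)(m)| ≤ M/4 ‖x - y‖²`. As `F(x) - F(y)` is affine with slope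
`D_xf - D_yf` and `‖x - a‖² + ‖y - a‖² = 2r² + d²/2` with `r = ‖a - m‖`, `d = ‖x - y‖`, the
ratio defining `Γ¹(F; x, y)` is at most `2(M d²/4 + M d r) / (2r² + d²/2) ≤ 2M`.
-/

open scoped Topology

section Taylor

variable {E F : Type*} [NormedAddCommGroup E] [NormedSpace ℝ E]
  [NormedAddCommGroup F] [NormedSpace ℝ F]

theorem Convex.norm_image_sub_sub_fderiv_le {s : Set E} (hs : Convex ℝ s) {f : E → F}
    {f' : E → E →L[ℝ] F} (hf : ∀ z ∈ s, HasFDerivAt f (f' z) z) {M : ℝ} {x y : E}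
    (hx : x ∈ s) (hy : y ∈ s) (hM : ∀ z ∈ s, ‖f' z - f' x‖ ≤ M * ‖z - x‖) :
    ‖f y - f x - f' x (y - x)‖ ≤ M / 2 * ‖y - x‖ ^ 2 := by
  set v := y - x
  have hseg : ∀ t ∈ Set.Icc (0 : ℝ) 1, x + t • v ∈ s := fun t ht =>
    hs.add_smul_sub_mem hx hy ht
  have hderiv : ∀ t ∈ Set.Icc (0 : ℝ) 1,
      HasDerivAt (fun t : ℝ => f (x + t • v) - f x - t • f' x v) ((f' (x + t • v) - f' x) v) t := by
    intro t ht
    have hline : HasDerivAt (fun t : ℝ => x + t • v) v t := by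
      simpa using ((hasDerivAt_id t).smul_const v).const_add x
    have := (((hf _ (hseg t ht)).comp_hasDerivAt t hline).sub_const (f x)).fun_sub
      ((hasDerivAt_id t).smul_const (f' x v))
    simpa using this
  have hbound : ∀ t ∈ Set.Ico (0 : ℝ) 1, ‖(f' (x + t • v) - f' x) v‖ ≤ M * ‖v‖ ^ 2 * t := by
    intro t ht
    calc ‖(f' (x + t • v) - f' x) v‖ ≤ ‖f' (x + t • v) - f' x‖ * ‖v‖ :=
          ContinuousLinearMap.le_opNorm _ _
      _ ≤ M * ‖t • v‖ * ‖v‖ := by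
          gcongr
          simpa using hM _ (hseg t (Set.Ico_subset_Icc_self ht))
      _ = M * ‖v‖ ^ 2 * t := by rw [norm_smul, Real.norm_of_nonneg ht.1]; ring
  have := image_norm_le_of_norm_deriv_right_le_deriv_boundary
    (fun t ht => (hderiv t ht).continuousAt.continuousWithinAt)
    (fun t ht => (hderiv t (Set.Ico_subset_Icc_self ht)).hasDerivWithinAt)
    (B := fun t => M / 2 * ‖v‖ ^ 2 * t ^ 2) (B' := fun t => M * ‖v‖ ^ 2 * t) (by simp)
    (fun t => ((hasDerivAt_pow 2 t).const_mul (M / 2 * ‖v‖ ^ 2)).congr_deriv (by norm_num; ring))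
    hbound (Set.right_mem_Icc.2 zero_le_one)
  simpa [v] using this

end Taylor

section LipOn

variable {α β : Type*} [NormedAddCommGroup α] [NormedAddCommGroup β] {g : α → β} {S : Set α}

variable (g S) in
theorem lipOn_nonneg : 0 ≤ lipOn g S :=
  Real.sSup_nonneg <| by
    rintro _ ⟨x, -, y, -, -, rfl⟩
    positivity

theorem norm_sub_le_lipOn_mul (hg : BddAbove (lipVals g S)) {x y : α} (hx : x ∈ S)
    (hy : y ∈ S) : ‖g x - g y‖ ≤ lipOn g S * ‖x - y‖ := by
  rcases eq_or_ne x y with rfl | hxy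
  · simp
  · exact (div_le_iff₀ (norm_sub_pos_iff.2 hxy)).1 (le_csSup hg ⟨x, hx, y, hy, hxy, rfl⟩)

end LipOn

section OneField

variable {H : Type*} [NormedAddCommGroup H] [InnerProductSpace ℝ H]
  {f : H → ℝ} {Df : H → H} {Ω : Set H} {x y : H}

variable (f Df) in
theorem fieldEval_sub_fieldEval_eq (x y a b : H) :
    fieldEval f Df x a - fieldEval f Df y a
      = fieldEval f Df x b - fieldEval f Df y b + ⟪Df x - Df y, a - b⟫ := by
  simp only [fieldEval, inner_sub_left, inner_sub_right]
  ring

variable (f Df) in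
theorem abs_fieldEval_sub_fieldEval_le (x y a b : H) :
    |fieldEval f Df x a - fieldEval f Df y a|
      ≤ |fieldEval f Df x b - fieldEval f Df y b| + ‖Df x - Df y‖ * ‖a - b‖ := by
  rw [fieldEval_sub_fieldEval_eq f Df x y a b]
  exact (abs_add_le _ _).trans (add_le_add_right (abs_real_inner_le_norm _ _) _)

theorem norm_sub_sq_add_norm_sub_sq (x y a : H) :
    ‖x - a‖ ^ 2 + ‖y - a‖ ^ 2 = 2 * ‖a - midpoint ℝ x y‖ ^ 2 + ‖x - y‖ ^ 2 / 2 := by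
  have apollonius :=
    EuclideanGeometry.dist_sq_add_dist_sq_eq_two_mul_dist_midpoint_sq_add_half_dist_sq a x y
  simp only [dist_eq_norm] at apollonius
  rw [norm_sub_rev x a, norm_sub_rev y a, apollonius]
  ring

theorem le_gammaPair (hxy : x ≠ y) (a : H) :
    2 * |fieldEval f Df x a - fieldEval f Df y a| / (‖x - a‖ ^ 2 + ‖y - a‖ ^ 2)
      ≤ gammaPair f Df x y := by
  set m := midpoint ℝ x y
  set A := |fieldEval f Df x m - fieldEval f Df y m|
  set L := ‖Df x - Df y‖
  set d := ‖x - y‖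
  have hd : 0 < d := norm_sub_pos_iff.2 hxy
  suffices hbdd : BddAbove (Set.range fun b =>
      2 * |fieldEval f Df x b - fieldEval f Df y b| / (‖x - b‖ ^ 2 + ‖y - b‖ ^ 2)) from
    le_ciSup hbdd a
  refine ⟨4 * A / d ^ 2 + L / d, ?_⟩
  rintro _ ⟨b, rfl⟩
  have hnum : |fieldEval f Df x b - fieldEval f Df y b| ≤ A + L * ‖b - m‖ :=
    abs_fieldEval_sub_fieldEval_le f Df x y b m
  have hA : 0 ≤ A := abs_nonneg _
  have hL : 0 ≤ L := norm_nonneg _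
  set r := ‖b - m‖
  dsimp only
  rw [norm_sub_sq_add_norm_sub_sq, div_le_iff₀ (by positivity)]
  calc 2 * |fieldEval f Df x b - fieldEval f Df y b| ≤ 2 * A + 2 * L * r := by linarith
    _ ≤ (4 * A / d ^ 2 + L / d) * (2 * r ^ 2 + d ^ 2 / 2) := by
      field_simp
      nlinarith [mul_nonneg hL (sq_nonneg (2 * r - d)), mul_nonneg hA (sq_nonneg r)]

variable (f Df Ω) in
theorem gammaOn_nonneg : 0 ≤ gammaOn f Df Ω :=
  Real.sSup_nonneg <| by
    rintro _ ⟨x, -, y, -, -, rfl⟩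
    exact Real.iSup_nonneg fun a => by positivity

theorem two_mul_abs_fieldEval_sub_le (hΓ : BddAbove (gammaVals f Df Ω)) (hx : x ∈ Ω)
    (hy : y ∈ Ω) (a : H) :
    2 * |fieldEval f Df x a - fieldEval f Df y a|
      ≤ gammaOn f Df Ω * (‖x - a‖ ^ 2 + ‖y - a‖ ^ 2) := by
  rcases eq_or_ne x y with rfl | hxy
  · simp only [sub_self, abs_zero, mul_zero]
    exact mul_nonneg (gammaOn_nonneg f Df Ω) (by positivity)
  · have hpos : 0 < ‖x - a‖ ^ 2 + ‖y - a‖ ^ 2 := by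
      rw [norm_sub_sq_add_norm_sub_sq]
      have := norm_sub_pos_iff.2 hxy
      positivity
    exact (div_le_iff₀ hpos).1
      ((le_gammaPair hxy a).trans (le_csSup hΓ ⟨x, hx, y, hy, hxy, rfl⟩))

theorem norm_sub_le_gammaOn_mul (hΓ : BddAbove (gammaVals f Df Ω)) (hx : x ∈ Ω) (hy : y ∈ Ω) :
    ‖Df x - Df y‖ ≤ 5 / 4 * gammaOn f Df Ω * ‖x - y‖ := by
  rcases eq_or_ne x y with rfl | hxy
  · simp
  have hK := gammaOn_nonneg f Df Ω
  have hd : 0 < ‖x - y‖ := norm_sub_pos_iff.2 hxy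
  -- `m ± w` have the same denominator, and the two numerators differ by `2⟪Df x - Df y, w⟫`.
  have key : ∀ w : H, 2 * |⟪Df x - Df y, w⟫|
      ≤ gammaOn f Df Ω * (2 * ‖w‖ ^ 2 + ‖x - y‖ ^ 2 / 2) := by
    intro w
    have hp := two_mul_abs_fieldEval_sub_le hΓ hx hy (midpoint ℝ x y + w)
    have hm := two_mul_abs_fieldEval_sub_le hΓ hx hy (midpoint ℝ x y - w)
    rw [norm_sub_sq_add_norm_sub_sq, fieldEval_sub_fieldEval_eq f Df x y _ (midpoint ℝ x y)]
      at hp hm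
    simp only [add_sub_cancel_left, sub_sub_cancel_left, norm_neg, inner_neg_right,
      ← sub_eq_add_neg] at hp hm
    have := abs_sub (fieldEval f Df x (midpoint ℝ x y) - fieldEval f Df y (midpoint ℝ x y)
      + ⟪Df x - Df y, w⟫) (fieldEval f Df x (midpoint ℝ x y) - fieldEval f Df y (midpoint ℝ x y)
      - ⟪Df x - Df y, w⟫)
    rw [add_sub_sub_cancel, ← two_mul, abs_mul, abs_two] at this
    linarith
  rcases eq_or_ne (Df x - Df y) 0 with hs | hs
  · rw [hs, norm_zero]
    positivity
  have hsn : 0 < ‖Df x - Df y‖ := norm_pos_iff.2 hs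
  have := key ((‖x - y‖ / ‖Df x - Df y‖) • (Df x - Df y))
  rw [inner_smul_right, real_inner_self_eq_norm_sq, norm_smul,
    Real.norm_of_nonneg (by positivity), div_mul_cancel₀ _ hsn.ne', abs_of_nonneg (by positivity),
    show ‖x - y‖ / ‖Df x - Df y‖ * ‖Df x - Df y‖ ^ 2 = ‖x - y‖ * ‖Df x - Df y‖ by
      field_simp] at this
  nlinarith

theorem bddAbove_lipVals_of_bddAbove_gammaVals (hΓ : BddAbove (gammaVals f Df Ω)) :
    BddAbove (lipVals Df Ω) := by
  refine ⟨5 / 4 * gammaOn f Df Ω, ?_⟩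
  rintro _ ⟨x, hx, y, hy, -, rfl⟩
  exact div_le_of_le_mul₀ (norm_nonneg _) (by positivity [gammaOn_nonneg f Df Ω])
    (norm_sub_le_gammaOn_mul hΓ hx hy)

theorem abs_sub_fieldEval_le_gammaOn (hΓ : BddAbove (gammaVals f Df Ω)) (hx : x ∈ Ω)
    (hy : y ∈ Ω) : |f y - fieldEval f Df x y| ≤ gammaOn f Df Ω / 2 * ‖y - x‖ ^ 2 := by
  have := two_mul_abs_fieldEval_sub_le hΓ hx hy y
  simp only [fieldEval, sub_self, inner_zero_right, add_zero, norm_zero] at this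
  rw [abs_sub_comm, norm_sub_rev]
  simp only [fieldEval]
  linarith

theorem hasFDerivAt_of_bddAbove_gammaVals (hΓ : BddAbove (gammaVals f Df Ω)) (hΩ : IsOpen Ω)
    (hx : x ∈ Ω) : HasFDerivAt f (innerSL ℝ (Df x)) x := by
  rw [hasFDerivAt_iff_isLittleO_nhds_zero]
  refine Asymptotics.IsBigO.trans_isLittleO ?_ (Asymptotics.isLittleO_norm_pow_id one_lt_two)
  refine Asymptotics.IsBigO.of_bound (gammaOn f Df Ω / 2) ?_
  have hnear : ∀ᶠ h in 𝓝 (0 : H), x + h ∈ Ω :=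
    (continuous_const.add continuous_id).continuousAt.preimage_mem_nhds
      (by simpa using hΩ.mem_nhds hx)
  filter_upwards [hnear] with h hh
  simpa [fieldEval, sub_sub] using abs_sub_fieldEval_le_gammaOn hΓ hx hh

theorem abs_sub_fieldEval_le_lipOn (hΓ : BddAbove (gammaVals f Df Ω)) (hΩo : IsOpen Ω)
    (hΩc : Convex ℝ Ω) (hx : x ∈ Ω) (hy : y ∈ Ω) :
    |f y - fieldEval f Df x y| ≤ lipOn Df Ω / 2 * ‖y - x‖ ^ 2 := by
  have hLip := bddAbove_lipVals_of_bddAbove_gammaVals hΓ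
  have := hΩc.norm_image_sub_sub_fderiv_le
    (fun z hz => hasFDerivAt_of_bddAbove_gammaVals hΓ hΩo hz) hx hy
    (fun z hz => by rw [← map_sub, innerSL_apply_norm]; exact norm_sub_le_lipOn_mul hLip hz hx)
  simpa [fieldEval, sub_sub] using this

theorem abs_fieldEval_sub_fieldEval_midpoint_le {C : ℝ}
    (hxm : |f (midpoint ℝ x y) - fieldEval f Df x (midpoint ℝ x y)|
      ≤ C * ‖midpoint ℝ x y - x‖ ^ 2)
    (hym : |f (midpoint ℝ x y) - fieldEval f Df y (midpoint ℝ x y)|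
      ≤ C * ‖midpoint ℝ x y - y‖ ^ 2) :
    |fieldEval f Df x (midpoint ℝ x y) - fieldEval f Df y (midpoint ℝ x y)|
      ≤ C / 2 * ‖x - y‖ ^ 2 := by
  have hsum := norm_sub_sq_add_norm_sub_sq x y (midpoint ℝ x y)
  rw [sub_self, norm_zero, norm_sub_rev x, norm_sub_rev y] at hsum
  calc _ = |(f (midpoint ℝ x y) - fieldEval f Df y (midpoint ℝ x y))
          - (f (midpoint ℝ x y) - fieldEval f Df x (midpoint ℝ x y))| := by ring_nf
    _ ≤ _ := (abs_sub _ _).trans (add_le_add hym hxm)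
    _ = C / 2 * ‖x - y‖ ^ 2 := by linear_combination C * hsum

theorem two_mul_abs_fieldEval_sub_le_of_midpoint {M : ℝ} (hM : 0 ≤ M)
    (hmid : |fieldEval f Df x (midpoint ℝ x y) - fieldEval f Df y (midpoint ℝ x y)|
      ≤ M / 4 * ‖x - y‖ ^ 2)
    (hD : ‖Df x - Df y‖ ≤ M * ‖x - y‖) (a : H) :
    2 * |fieldEval f Df x a - fieldEval f Df y a| ≤ 2 * M * (‖x - a‖ ^ 2 + ‖y - a‖ ^ 2) := by
  have hnum := abs_fieldEval_sub_fieldEval_le f Df x y a (midpoint ℝ x y)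
  rw [norm_sub_sq_add_norm_sub_sq]
  have hr := norm_nonneg (a - midpoint ℝ x y)
  have hd := norm_nonneg (x - y)
  nlinarith [mul_le_mul_of_nonneg_right hD hr,
    mul_nonneg hM (sq_nonneg (2 * ‖a - midpoint ℝ x y‖ - ‖x - y‖ / 2)),
    mul_nonneg hM (sq_nonneg ‖x - y‖)]

end OneField

theorem stmt_2_general {n : ℕ} (Ω : Set (EuclideanSpace ℝ (Fin n)))
    (hΩop : IsOpen Ω) (hΩconv : Convex ℝ Ω)
    (f : EuclideanSpace ℝ (Fin n) → ℝ)
    (Df : EuclideanSpace ℝ (Fin n) → EuclideanSpace ℝ (Fin n))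
    (hTay : BddAbove (gammaVals f Df Ω)) :
    gammaOn f Df Ω ≤ 2 * lipOn Df Ω := by
  have hLip := bddAbove_lipVals_of_bddAbove_gammaVals hTay
  have hM := lipOn_nonneg Df Ω
  refine Real.sSup_le ?_ (by positivity)
  rintro _ ⟨x, hx, y, hy, -, rfl⟩
  refine Real.iSup_le (fun a => div_le_of_le_mul₀ (by positivity) (by positivity) ?_)
    (by positivity)
  have hm := hΩconv.midpoint_mem hx hy
  refine two_mul_abs_fieldEval_sub_le_of_midpoint hM ?_ (norm_sub_le_lipOn_mul hLip hx hy) a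
  have := abs_fieldEval_sub_fieldEval_midpoint_le
    (abs_sub_fieldEval_le_lipOn hTay hΩop hΩconv hx hm)
    (abs_sub_fieldEval_le_lipOn hTay hΩop hΩconv hy hm)
  linarith

/-- If `Ω ⊆ ℝⁿ` is nonempty, open and convex and `F = (f, Df)` is a
Taylorian 1-field on `Ω`, then `Γ¹(F;Ω) ≤ 2 Lip(Df;Ω)`. -/
theorem stmt_2 {n : ℕ} (hn : 1 ≤ n) (Ω : Set (EuclideanSpace ℝ (Fin n)))
    (hΩne : Ω.Nonempty) (hΩop : IsOpen Ω) (hΩconv : Convex ℝ Ω)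
    (f : EuclideanSpace ℝ (Fin n) → ℝ)
    (Df : EuclideanSpace ℝ (Fin n) → EuclideanSpace ℝ (Fin n))
    (hTay : BddAbove (gammaVals f Df Ω)) :
    gammaOn f Df Ω ≤ 2 * lipOn Df Ω :=
  stmt_2_general Ω hΩop hΩconv f Df hTay
end
end

section
/- There exist a nonempty open convex set Ω ⊆ ℝ² and a Taylorian 1-field F on Ω such that Lip(Df;Ω) < Γ¹(F;Ω). -/
noncomputable section

open scoped RealInnerProductSpace

/-!
The example is `f(x₀, x₁) = x₀x₁ + (3/16)x₀ - (1/16)(x₀³ - 3x₀x₁²)` on the thin box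
`|x₀| < 1.01, |x₁| < 0.01`. For any 1-field, `F(x)(a) - F(y)(a)` splits as the trapezoid error
`f(x) - f(y) - ⟨½(D_xf + D_yf), x - y⟩` plus `⟨D_xf - D_yf, a - (x + y)/2⟩`, so a Lipschitz
gradient together with a quadratic bound on the trapezoid error makes the field Taylorian.
Here `D_xf - D_yf` is `x - y` mapped by a reflection scaled by at most `27/25` on the box, so
`Lip(Df) ≤ 27/25`, while the harmonic cubic makes the trapezoid error `(1/32)d₀(d₀² - 3d₁²)`,
`d = x - y`. For `x = (1,0)`, `y = (-1,0)` and `a = (0, 7/8)` this error adds to the linear term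
and the quotient reaches `128/113 > 27/25`.
-/

section Taylorian

variable {H : Type*} [NormedAddCommGroup H] [InnerProductSpace ℝ H]
  {f : H → ℝ} {Df : H → H} {x y : H} {L κ : ℝ} {S : Set H}

def gammaQuot (f : H → ℝ) (Df : H → H) (x y a : H) : ℝ :=
  2 * |fieldEval f Df x a - fieldEval f Df y a| / (‖x - a‖ ^ 2 + ‖y - a‖ ^ 2)

def trapezoidError (f : H → ℝ) (Df : H → H) (x y : H) : ℝ :=
  f x - f y - ⟪(1 / 2 : ℝ) • (Df x + Df y), x - y⟫

lemma fieldEval_sub_fieldEval (f : H → ℝ) (Df : H → H) (x y a : H) :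
    fieldEval f Df x a - fieldEval f Df y a =
      trapezoidError f Df x y + ⟪Df x - Df y, a - (1 / 2 : ℝ) • (x + y)⟫ := by
  simp only [fieldEval, trapezoidError, inner_add_left, inner_sub_left, inner_sub_right,
    inner_add_right, real_inner_smul_left, real_inner_smul_right]
  ring

lemma gammaQuot_le (hxy : x ≠ y) (hL : ‖Df x - Df y‖ ≤ L * ‖x - y‖)
    (hκ : |trapezoidError f Df x y| ≤ κ * ‖x - y‖ ^ 2) (a : H) :
    gammaQuot f Df x y a ≤ 2 * L + 4 * κ := by
  set p := ‖x - a‖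
  set q := ‖y - a‖
  have hd : ‖x - y‖ ≤ p + q :=
    (norm_sub_le_norm_sub_add_norm_sub x a y).trans_eq (by rw [norm_sub_rev a y])
  have hc : ‖a - (1 / 2 : ℝ) • (x + y)‖ ≤ (p + q) / 2 := by
    have : a - (1 / 2 : ℝ) • (x + y) = -((1 / 2 : ℝ) • ((x - a) + (y - a))) := by module
    rw [this, norm_neg, norm_smul, Real.norm_of_nonneg (by norm_num)]
    linarith [norm_add_le (x - a) (y - a)]
  have hxy' : 0 < ‖x - y‖ := norm_sub_pos_iff.2 hxy
  have hL0 : 0 ≤ L := nonneg_of_mul_nonneg_left ((norm_nonneg _).trans hL) hxy'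
  have hκ0 : 0 ≤ κ := nonneg_of_mul_nonneg_left ((abs_nonneg _).trans hκ) (by positivity)
  have hden : 0 < p ^ 2 + q ^ 2 := by
    have : 0 < p + q := hxy'.trans_le hd
    nlinarith [mul_pos this this, sq_nonneg (p - q)]
  have hlin : |⟪Df x - Df y, a - (1 / 2 : ℝ) • (x + y)⟫| ≤ L * (p ^ 2 + q ^ 2) :=
    calc _ ≤ ‖Df x - Df y‖ * ‖a - (1 / 2 : ℝ) • (x + y)‖ := abs_real_inner_le_norm _ _
      _ ≤ (L * (p + q)) * ((p + q) / 2) := by gcongr; exact hL.trans (by gcongr)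
      _ ≤ L * (p ^ 2 + q ^ 2) := by nlinarith [sq_nonneg (p - q)]
  have hquad : κ * ‖x - y‖ ^ 2 ≤ 2 * κ * (p ^ 2 + q ^ 2) :=
    calc κ * ‖x - y‖ ^ 2 ≤ κ * (p + q) ^ 2 := by gcongr
      _ ≤ 2 * κ * (p ^ 2 + q ^ 2) := by nlinarith [sq_nonneg (p - q)]
  rw [gammaQuot, div_le_iff₀ hden, fieldEval_sub_fieldEval]
  linarith [abs_add_le (trapezoidError f Df x y) ⟪Df x - Df y, a - (1 / 2 : ℝ) • (x + y)⟫]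

lemma gammaPair_le (hxy : x ≠ y) (hL : ‖Df x - Df y‖ ≤ L * ‖x - y‖)
    (hκ : |trapezoidError f Df x y| ≤ κ * ‖x - y‖ ^ 2) :
    gammaPair f Df x y ≤ 2 * L + 4 * κ :=
  ciSup_le (gammaQuot_le hxy hL hκ)

lemma gammaQuot_le_gammaPair (hxy : x ≠ y) (hL : ‖Df x - Df y‖ ≤ L * ‖x - y‖)
    (hκ : |trapezoidError f Df x y| ≤ κ * ‖x - y‖ ^ 2) (a : H) :
    gammaQuot f Df x y a ≤ gammaPair f Df x y :=
  le_ciSup ⟨_, Set.forall_mem_range.2 (gammaQuot_le hxy hL hκ)⟩ a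

lemma bddAbove_gammaVals {C : ℝ} (h : ∀ x ∈ S, ∀ y ∈ S, x ≠ y → gammaPair f Df x y ≤ C) :
    BddAbove (gammaVals f Df S) := by
  refine ⟨C, ?_⟩
  rintro _ ⟨x, hx, y, hy, hxy, rfl⟩
  exact h x hx y hy hxy

lemma gammaPair_le_gammaOn (hS : BddAbove (gammaVals f Df S)) (hx : x ∈ S) (hy : y ∈ S)
    (hxy : x ≠ y) : gammaPair f Df x y ≤ gammaOn f Df S :=
  le_csSup hS ⟨x, hx, y, hy, hxy, rfl⟩

end Taylorian

lemma lipOn_le {α β : Type*} [NormedAddCommGroup α] [NormedAddCommGroup β] {g : α → β}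
    {S : Set α} {K : ℝ} (hK : 0 ≤ K) (h : ∀ x ∈ S, ∀ y ∈ S, ‖g x - g y‖ ≤ K * ‖x - y‖) :
    lipOn g S ≤ K := by
  refine Real.sSup_le ?_ hK
  rintro _ ⟨x, hx, y, hy, hxy, rfl⟩
  rw [div_le_iff₀ (norm_sub_pos_iff.2 hxy)]
  exact h x hx y hy

namespace CubicExample

local notation "ℝ²" => EuclideanSpace ℝ (Fin 2)

open Set

def box : Set ℝ² :=
  {z | z 0 ∈ Ioo (-(101 / 100)) (101 / 100) ∧ z 1 ∈ Ioo (-(1 / 100)) (1 / 100)}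

def cubic (z : ℝ²) : ℝ :=
  -(1 / 16) * z 0 ^ 3 + 3 / 16 * z 0 * z 1 ^ 2 + z 0 * z 1 + 3 / 16 * z 0

def cubicGrad (z : ℝ²) : ℝ² :=
  !₂[-(3 / 16) * z 0 ^ 2 + 3 / 16 * z 1 ^ 2 + z 1 + 3 / 16, 3 / 8 * z 0 * z 1 + z 0]

lemma isOpen_box : IsOpen box :=
  (isOpen_Ioo.preimage (by fun_prop)).inter (isOpen_Ioo.preimage (by fun_prop))

lemma convex_box : Convex ℝ box :=
  ((convex_Ioo _ _).linear_preimage (EuclideanSpace.proj (0 : Fin 2)).toLinearMap).inter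
    ((convex_Ioo _ _).linear_preimage (EuclideanSpace.proj (1 : Fin 2)).toLinearMap)

lemma inner_eq (x y : ℝ²) : ⟪x, y⟫ = x 0 * y 0 + x 1 * y 1 := by
  simp only [PiLp.inner_apply, RCLike.inner_apply, Real.ringHom_apply, Fin.sum_univ_two]
  ring

lemma norm_sq_eq (x : ℝ²) : ‖x‖ ^ 2 = x 0 ^ 2 + x 1 ^ 2 := by
  rw [← real_inner_self_eq_norm_sq, inner_eq]; ring

lemma norm_cubicGrad_sub_sq (x y : ℝ²) :
    ‖cubicGrad x - cubicGrad y‖ ^ 2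
      = ((3 / 16 * (x 0 + y 0)) ^ 2 + (1 + 3 / 16 * (x 1 + y 1)) ^ 2) * ‖x - y‖ ^ 2 := by
  simp only [norm_sq_eq, cubicGrad, PiLp.sub_apply, Matrix.cons_val_zero, Matrix.cons_val_one,
    Matrix.cons_val_fin_one]
  ring

lemma trapezoidError_cubic (x y : ℝ²) :
    trapezoidError cubic cubicGrad x y
      = 1 / 32 * (x 0 - y 0) * ((x 0 - y 0) ^ 2 - 3 * (x 1 - y 1) ^ 2) := by
  simp only [trapezoidError, cubic, cubicGrad, inner_eq, PiLp.add_apply, PiLp.smul_apply,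
    PiLp.sub_apply, smul_eq_mul, Matrix.cons_val_zero, Matrix.cons_val_one, Matrix.cons_val_fin_one]
  ring

variable {x y : ℝ²}

lemma norm_cubicGrad_sub_le (hx : x ∈ box) (hy : y ∈ box) :
    ‖cubicGrad x - cubicGrad y‖ ≤ 27 / 25 * ‖x - y‖ := by
  obtain ⟨⟨hx0, hx0'⟩, hx1, hx1'⟩ := hx
  obtain ⟨⟨hy0, hy0'⟩, hy1, hy1'⟩ := hy
  have hX : (3 / 16 * (x 0 + y 0)) ^ 2 ≤ (3 / 16 * (202 / 100)) ^ 2 :=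
    sq_le_sq' (by linarith) (by linarith)
  have hY : (1 + 3 / 16 * (x 1 + y 1)) ^ 2 ≤ (1 + 3 / 16 * (2 / 100)) ^ 2 :=
    sq_le_sq' (by linarith) (by linarith)
  refine le_of_pow_le_pow_left₀ two_ne_zero (by positivity) ?_
  rw [norm_cubicGrad_sub_sq, mul_pow _ ‖x - y‖]
  gcongr ?_ * _
  linarith

lemma abs_trapezoidError_cubic_le (hx : x ∈ box) (hy : y ∈ box) :
    |trapezoidError cubic cubicGrad x y| ≤ 1 / 5 * ‖x - y‖ ^ 2 := by
  obtain ⟨⟨hx0, hx0'⟩, -⟩ := hx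
  obtain ⟨⟨hy0, hy0'⟩, -⟩ := hy
  have hd : |x 0 - y 0| ≤ 202 / 100 := abs_le.2 ⟨by linarith, by linarith⟩
  have hq : |(x 0 - y 0) ^ 2 - 3 * (x 1 - y 1) ^ 2| ≤ 3 * ‖x - y‖ ^ 2 := by
    rw [norm_sq_eq]
    simp only [PiLp.sub_apply]
    exact abs_le.2 ⟨by nlinarith [sq_nonneg (x 0 - y 0)], by nlinarith [sq_nonneg (x 1 - y 1)]⟩
  rw [trapezoidError_cubic, abs_mul, abs_mul]
  calc |1 / 32| * |x 0 - y 0| * |(x 0 - y 0) ^ 2 - 3 * (x 1 - y 1) ^ 2|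
      ≤ |1 / 32| * (202 / 100) * (3 * ‖x - y‖ ^ 2) := by gcongr
    _ ≤ 1 / 5 * ‖x - y‖ ^ 2 := by rw [abs_of_pos (by norm_num)]; nlinarith [sq_nonneg ‖x - y‖]

lemma gammaQuot_cubic_witness :
    gammaQuot cubic cubicGrad !₂[1, 0] !₂[-1, 0] !₂[0, 7 / 8] = 128 / 113 := by
  norm_num [gammaQuot, fieldEval, norm_sq_eq, inner_eq, cubic, cubicGrad]

end CubicExample

open CubicExample

/-- There exist a nonempty open convex set `Ω ⊆ ℝ²` and a Taylorian
1-field `F = (f, Df)` on `Ω` with `Lip(Df;Ω) < Γ¹(F;Ω)`. -/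
theorem stmt_5 :
    ∃ (Ω : Set (EuclideanSpace ℝ (Fin 2))) (f : EuclideanSpace ℝ (Fin 2) → ℝ)
      (Df : EuclideanSpace ℝ (Fin 2) → EuclideanSpace ℝ (Fin 2)),
      Ω.Nonempty ∧ IsOpen Ω ∧ Convex ℝ Ω ∧ BddAbove (gammaVals f Df Ω) ∧
        lipOn Df Ω < gammaOn f Df Ω := by
  have hbdd : BddAbove (gammaVals cubic cubicGrad box) :=
    bddAbove_gammaVals fun x hx y hy hxy =>
      gammaPair_le hxy (norm_cubicGrad_sub_le hx hy) (abs_trapezoidError_cubic_le hx hy)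
  have hp : !₂[(1 : ℝ), 0] ∈ box := by norm_num [box]
  have hq : !₂[(-1 : ℝ), 0] ∈ box := by norm_num [box]
  have hpq : !₂[(1 : ℝ), 0] ≠ !₂[-1, 0] := fun h => by norm_num at h
  refine ⟨box, cubic, cubicGrad, ⟨_, hp⟩, isOpen_box, convex_box, hbdd, ?_⟩
  calc lipOn cubicGrad box ≤ 27 / 25 :=
        lipOn_le (by norm_num) fun x hx y hy => norm_cubicGrad_sub_le hx hy
    _ < 128 / 113 := by norm_num
    _ = _ := gammaQuot_cubic_witness.symm
    _ ≤ gammaPair cubic cubicGrad !₂[1, 0] !₂[-1, 0] :=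
        gammaQuot_le_gammaPair hpq (norm_cubicGrad_sub_le hp hq) (abs_trapezoidError_cubic_le hp hq) _
    _ ≤ gammaOn cubic cubicGrad box := gammaPair_le_gammaOn hbdd hp hq hpq
end
end
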